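/- arXiv:1312.4064 — 4 statements merged into one kernel-verified Lean document; each statement's English description precedes it below -/
import Mathlib

section
/- Let 0<α<1, let n≥1 and i∈{1,…,n−1} be integers, and let N be an integer with N ≥ n−i−1. Then (1/Γ(i+1−α)) · ∑_{p=N+1}^∞ Γ(p−n+1+α)/(Γ(α−i)·(p−n+i+1)!) = −(1/Γ(i+1−α)) · ∑_{p=0}^{N−n+i+1} Γ(p+α−i)/(Γ(α−i)·p!), i.e. the tail of the series defining the coefficient A(α,i) of the moment expansion of the left Riemann–Liouville derivative equals the negative of a finite partial sum. -/
/-!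
With `β = α - i < 0` not an integer, the terms `Γ(p + β) / (Γ(β) p!)` are the binomial
coefficients of `(1 - x)^(-β)`, and their partial sums telescope to
`Γ(β + Q + 1) / (β Γ(β) Q!)`.
By Euler's limit formula `Γ(β + Q + 1) / Q! ~ Γ(β) Q^β → 0`, so the whole series sums to `0`
(the terms have constant sign for `p > -β`, so the convergence is unconditional), and the
tail starting at `N + i + 2 - n` is minus the preceding finite sum.
-/
open Filter Finset Topology
open scoped Nat

theorem hasSum_of_tendsto_sum_range_of_nonneg_shift {f : ℕ → ℝ} {a : ℝ} (k : ℕ)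
    (hf : ∀ p, 0 ≤ f (p + k))
    (h : Tendsto (fun n ↦ ∑ p ∈ range n, f p) atTop (𝓝 a)) : HasSum f a := by
  rw [← hasSum_nat_add_iff' k, hasSum_iff_tendsto_nat_of_nonneg hf]
  have hshift := (h.comp (tendsto_add_atTop_nat k)).sub_const (∑ p ∈ range k, f p)
  refine hshift.congr fun n ↦ ?_
  simp only [Function.comp_apply, ← sum_range_add_sub_sum_range, add_comm _ k]

namespace Real

variable {β : ℝ}

theorem Gamma_add_nat_eq_mul_prod (hβ : ∀ m : ℕ, β ≠ -m) (n : ℕ) :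
    Gamma (β + n) = Gamma β * ∏ j ∈ range n, (β + j) := by
  induction n with
  | zero => simp
  | succ n ih =>
    have hβn : β + n ≠ 0 := fun h ↦ hβ n (by linarith)
    rw [prod_range_succ, ← mul_assoc, ← ih, mul_comm _ (β + n), ← Gamma_add_one hβn]
    push_cast; ring_nf

theorem tendsto_Gamma_add_nat_add_one_div_factorial (hβ : ∀ m : ℕ, β ≠ -m) (hβ0 : β < 0) :
    Tendsto (fun n : ℕ ↦ Gamma (β + n + 1) / n !) atTop (𝓝 0) := by
  have hpow : Tendsto (fun n : ℕ ↦ (n : ℝ) ^ β) atTop (𝓝 0) := by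
    simpa only [neg_neg, Function.comp_def] using
      (tendsto_rpow_neg_atTop (neg_pos.2 hβ0)).comp tendsto_natCast_atTop_atTop
  have hG := Gamma_ne_zero hβ
  have hlim := (hpow.div (GammaSeq_tendsto_Gamma β) hG).const_mul (Gamma β)
  rw [zero_div, mul_zero] at hlim
  refine hlim.congr' ?_
  filter_upwards [eventually_ge_atTop 1] with n hn
  have hprod : ∏ j ∈ range (n + 1), (β + j) ≠ 0 :=
    prod_ne_zero_iff.2 fun j _ h ↦ hβ j (by linarith)
  have hnβ : (n : ℝ) ^ β ≠ 0 := (rpow_pos_of_pos (by exact_mod_cast hn) β).ne'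
  rw [Pi.div_apply, GammaSeq, add_assoc, ← Nat.cast_add_one, Gamma_add_nat_eq_mul_prod hβ]
  field_simp

theorem sum_range_succ_Gamma_add_div_factorial (hβ : ∀ m : ℕ, β ≠ -m) (n : ℕ) :
    ∑ p ∈ range (n + 1), Gamma (p + β) / p ! = Gamma (β + n + 1) / (β * n !) := by
  have hβ0 : β ≠ 0 := by simpa using hβ 0
  induction n with
  | zero => simp [Gamma_add_one hβ0, hβ0]
  | succ n ih =>
    have hβn : β + n + 1 ≠ 0 := fun h ↦ hβ (n + 1) (by push_cast; linarith)
    rw [sum_range_succ, ih, Nat.factorial_succ, Nat.cast_succ, ← add_assoc, Gamma_add_one hβn,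
      add_comm _ β]
    push_cast
    field_simp
    rw [← add_assoc]
    ring

theorem hasSum_Gamma_add_div_factorial (hβ : ∀ m : ℕ, β ≠ -m) (hβ0 : β < 0) :
    HasSum (fun p : ℕ ↦ Gamma (p + β) / p !) 0 := by
  refine hasSum_of_tendsto_sum_range_of_nonneg_shift (⌊-β⌋₊ + 1) (fun p ↦ ?_) ?_
  · have hβfloor := Nat.lt_floor_add_one (-β)
    have hp : 0 < ((p + (⌊-β⌋₊ + 1) : ℕ) : ℝ) + β := by
      push_cast
      linarith [p.cast_nonneg' (α := ℝ)]
    exact div_nonneg (Gamma_pos_of_pos hp).le (Nat.cast_nonneg _)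
  · rw [← tendsto_add_atTop_iff_nat 1]
    have hlim := (tendsto_Gamma_add_nat_add_one_div_factorial hβ hβ0).div_const β
    rw [zero_div] at hlim
    refine hlim.congr fun n ↦ ?_
    rw [sum_range_succ_Gamma_add_div_factorial hβ, div_div, mul_comm]

end Real

theorem stmt5_general (α : ℝ) (n i N : ℕ) (hα : 0 < α) (hα1 : α < 1)
    (hi : 1 ≤ i) (hN : n ≤ N + i + 1) :
    (1 / Real.Gamma ((i : ℝ) + 1 - α)) *
        ∑' q : ℕ,
          Real.Gamma (((N : ℝ) + 1 + (q : ℝ)) - (n : ℝ) + 1 + α) /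
            (Real.Gamma (α - (i : ℝ)) * (Nat.factorial (N + 2 + q + i - n) : ℝ))
      = -(1 / Real.Gamma ((i : ℝ) + 1 - α)) *
          ∑ p ∈ Finset.range (N + i + 2 - n),
            Real.Gamma ((p : ℝ) + α - (i : ℝ)) /
              (Real.Gamma (α - (i : ℝ)) * (Nat.factorial p : ℝ)) := by
  have hβ : ∀ m : ℕ, α - i ≠ -m := by
    intro m h
    have h0 : (0 : ℝ) < ((i - m : ℤ) : ℝ) := by push_cast; linarith
    have h1 : ((i - m : ℤ) : ℝ) < 1 := by push_cast; linarith
    norm_cast at h0 h1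
    omega
  have hβ0 : α - i < 0 := by
    have : (1 : ℝ) ≤ i := by exact_mod_cast hi
    linarith
  have hsum := (Real.hasSum_Gamma_add_div_factorial hβ hβ0).div_const (Real.Gamma (α - i))
  rw [zero_div, ← hasSum_nat_add_iff' (N + i + 2 - n), zero_sub] at hsum
  have htail : (fun q : ℕ ↦ Real.Gamma (N + 1 + q - n + 1 + α) /
        (Real.Gamma (α - i) * (N + 2 + q + i - n)!)) =
      fun q ↦ Real.Gamma ((q + (N + i + 2 - n) : ℕ) + (α - i)) / (q + (N + i + 2 - n))! /
        Real.Gamma (α - i) := by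
    funext q
    rw [show N + 2 + q + i - n = q + (N + i + 2 - n) by omega, div_div, mul_comm (Real.Gamma _)]
    push_cast [Nat.cast_sub (by omega : n ≤ N + i + 2)]
    ring_nf
  rw [htail, hsum.tsum_eq, neg_mul, mul_neg]
  congr 2
  refine sum_congr rfl fun p _ ↦ ?_
  rw [add_sub_assoc, div_div, mul_comm]

/-- Tail identity for the coefficient `A(α,i)` of the moment expansion of the left
Riemann–Liouville derivative: for `0<α<1`, integers `n ≥ 1`, `1 ≤ i ≤ n−1` and
`N ≥ n−i−1`,
`(1/Γ(i+1−α)) ∑_{p=N+1}^∞ Γ(p−n+1+α)/(Γ(α−i)(p−n+i+1)!)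
  = −(1/Γ(i+1−α)) ∑_{p=0}^{N−n+i+1} Γ(p+α−i)/(Γ(α−i) p!)`
(the infinite tail is reindexed by `p = N+1+q`, `q ∈ ℕ`). -/
theorem stmt5 (α : ℝ) (n i N : ℕ) (hα : 0 < α) (hα1 : α < 1)
    (hn : 1 ≤ n) (hi : 1 ≤ i) (hin : i ≤ n - 1) (hN : n ≤ N + i + 1) :
    (1 / Real.Gamma ((i : ℝ) + 1 - α)) *
        ∑' q : ℕ,
          Real.Gamma (((N : ℝ) + 1 + (q : ℝ)) - (n : ℝ) + 1 + α) /
            (Real.Gamma (α - (i : ℝ)) * (Nat.factorial (N + 2 + q + i - n) : ℝ))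
      = -(1 / Real.Gamma ((i : ℝ) + 1 - α)) *
          ∑ p ∈ Finset.range (N + i + 2 - n),
            Real.Gamma ((p : ℝ) + α - (i : ℝ)) /
              (Real.Gamma (α - (i : ℝ)) * (Nat.factorial p : ℝ)) :=
  stmt5_general α n i N hα hα1 hi hN
end

section
/- Let α>0 be a non-integer real number, let n≥1 be an integer and let x∈C^n([a,b];ℝ). Then for every t∈[a,b], _aI_t^α x(t) = ∑_{i=0}^{n−1} A_i(α)·(t−a)^{α+i}·x^{(i)}(t) + ∑_{p=n}^∞ B(α,p)·(t−a)^{α+n−1−p}·V_p(t), where A_i(α) = (1/Γ(α+i+1))·[1 + ∑_{p=n−i}^∞ Γ(p−α−n+1)/(Γ(−α−i)·(p−n+1+i)!)] for i=0,…,n−1, B(α,p) = Γ(p−α−n+1)/(Γ(α)·Γ(1−α)·(p−n+1)!), and V_p(t) = ∫_a^t (p−n+1)·(τ−a)^{p−n}·x(τ) dτ for p=n,n+1,…, the series being convergent. -/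
/-- Left Riemann–Liouville fractional integral of order `α`:
`_aI_t^α x(t) = (1/Γ(α)) ∫_a^t (t−τ)^{α−1} x(τ) dτ`. -/
noncomputable def rlIntLeft (a α : ℝ) (x : ℝ → ℝ) (t : ℝ) : ℝ :=
  (1 / Real.Gamma α) * ∫ τ in a..t, (t - τ) ^ (α - 1) * x τ

/-!
Writing `Γ(n + s) / (Γ(s) n!)` as the rising binomial coefficient `multichoose s n`, the
bracket in `A_i(α)` is `∑_{n ≥ 0} multichoose (-α-i) n`, the binomial series of `(1 - 1)^(α+i)`,
so every `A_i(α)` vanishes. What remains is the binomial expansion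
`(t - τ)^(α-1) = ∑_n multichoose (1-α) n (t-a)^(α-1-n) (τ-a)^n`, integrated term by term against
`x`. Both the boundary case of the binomial series and the interchange of sum and integral rest
on the bound `multichoose s n = O(n^(s-1))`, read off from Euler's limit formula for `Γ(s)`.
-/

open Real Filter Topology Asymptotics
open scoped Nat

section Multichoose

open Finset

theorem Ring.prod_range_add_natCast_eq_factorial_mul_multichoose {R : Type*} [CommRing R]
    [BinomialRing R] (r : R) (n : ℕ) :
    ∏ j ∈ range n, (r + j) = n ! * Ring.multichoose r n := by
  rw [← nsmul_eq_mul, Ring.factorial_nsmul_multichoose_eq_ascPochhammer,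
    Polynomial.ascPochhammer_smeval_eq_eval]
  induction n with
  | zero => simp
  | succ n ih => rw [prod_range_succ, ih, ascPochhammer_succ_eval]

theorem Ring.multichoose_sub_one_succ_mul {K : Type*} [Field K] [CharZero K] [BinomialRing K]
    (s : K) (n : ℕ) :
    Ring.multichoose (s - 1) (n + 1) * (n + 1) = (s - 1) * Ring.multichoose s n := by
  have h := Ring.prod_range_add_natCast_eq_factorial_mul_multichoose (s - 1) (n + 1)
  have hshift : ∏ k ∈ range n, (s - 1 + ((k + 1 : ℕ) : K)) = ∏ k ∈ range n, (s + k) := by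
    push_cast
    ring_nf
  rw [prod_range_succ', hshift, Ring.prod_range_add_natCast_eq_factorial_mul_multichoose,
    Nat.factorial_succ] at h
  push_cast at h
  apply mul_left_cancel₀ (Nat.cast_ne_zero.mpr n.factorial_ne_zero : (n ! : K) ≠ 0)
  linear_combination -h

theorem Ring.sum_range_succ_multichoose {R : Type*} [NonAssocSemiring R] [Pow R ℕ]
    [NatPowAssoc R] [BinomialRing R] (r : R) (n : ℕ) :
    ∑ k ∈ range (n + 1), Ring.multichoose r k = Ring.multichoose (r + 1) n := by
  induction n with
  | zero => simp
  | succ n ih => rw [sum_range_succ, ih, Ring.multichoose_succ_succ, add_comm]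

theorem Real.Gamma_add_nat_div_eq_multichoose {s : ℝ} (hs : ∀ m : ℕ, s ≠ -m) (n : ℕ) :
    Gamma (s + n) / (Gamma s * n !) = Ring.multichoose s n := by
  suffices Gamma (s + n) = Gamma s * ∏ j ∈ range n, (s + j) by
    rw [this, Ring.prod_range_add_natCast_eq_factorial_mul_multichoose, ← mul_assoc,
      mul_div_cancel_left₀ _ (mul_ne_zero (Gamma_ne_zero hs) (by positivity))]
  induction n with
  | zero => simp
  | succ n ih =>
    have hsn : s + n ≠ 0 := fun h => hs n (by linarith)
    rw [prod_range_succ, ← mul_assoc, ← ih, mul_comm _ (s + n), ← Gamma_add_one hsn]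
    push_cast
    ring_nf

theorem Real.isBigO_multichoose_succ {s : ℝ} (hs : ∀ m : ℕ, s ≠ -m) :
    (fun n : ℕ => Ring.multichoose s (n + 1)) =O[atTop] fun n : ℕ => (n : ℝ) ^ (s - 1) := by
  have hinv : (fun n => (GammaSeq s n)⁻¹) =O[atTop] (fun _ : ℕ => (1 : ℝ)) :=
    ((GammaSeq_tendsto_Gamma s).inv₀ (Gamma_ne_zero hs)).isBigO_one ℝ
  have hpow : (fun n : ℕ => (n : ℝ) ^ s / (n + 1)) =O[atTop] fun n : ℕ => (n : ℝ) ^ (s - 1) := by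
    refine IsBigO.of_bound 1 ?_
    filter_upwards [eventually_gt_atTop 0] with n hn
    have hn' : (0 : ℝ) < n := by exact_mod_cast hn
    rw [norm_div, norm_of_nonneg (rpow_nonneg hn'.le _), norm_of_nonneg (rpow_nonneg hn'.le _),
      one_mul, norm_of_nonneg (by positivity), rpow_sub_one hn'.ne']
    gcongr
    linarith
  refine (hinv.mul hpow).congr' ?_ (by simp)
  filter_upwards [eventually_gt_atTop 0] with n hn
  have hn' : (0 : ℝ) < n := by exact_mod_cast hn
  have hpow_ne : (n : ℝ) ^ s ≠ 0 := (rpow_pos_of_pos hn' s).ne'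
  rw [GammaSeq, Ring.prod_range_add_natCast_eq_factorial_mul_multichoose, Nat.factorial_succ]
  push_cast
  field_simp

theorem Real.tendsto_multichoose_atTop_zero {s : ℝ} (hs : s < 1) (hs' : ∀ m : ℕ, s ≠ -m) :
    Tendsto (Ring.multichoose s) atTop (𝓝 0) := by
  refine (tendsto_add_atTop_iff_nat 1).mp ((isBigO_multichoose_succ hs').trans_tendsto ?_)
  have h := (tendsto_rpow_neg_atTop (y := 1 - s) (by linarith)).comp tendsto_natCast_atTop_atTop
  simpa only [Function.comp_def, neg_sub] using h

theorem Real.summable_multichoose {s : ℝ} (hs : s < 0) (hs' : ∀ m : ℕ, s ≠ -m) :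
    Summable (Ring.multichoose s) :=
  (summable_nat_add_iff 1).mp <|
    summable_of_isBigO_nat' (summable_nat_rpow.mpr (by linarith)) (isBigO_multichoose_succ hs')

theorem Real.summable_abs_multichoose_div_succ {s : ℝ} (hs : s < 1)
    (hs' : ∀ m : ℕ, s - 1 ≠ -m) :
    Summable fun n : ℕ => |Ring.multichoose s n| / (n + 1) := by
  have h := ((summable_nat_add_iff 1).mpr (summable_multichoose (by linarith) hs')).abs
  refine (h.div_const |s - 1|).congr fun n => ?_
  have hs1 : |s - 1| ≠ 0 := abs_ne_zero.mpr (by linarith)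
  have hrec := congrArg abs (Ring.multichoose_sub_one_succ_mul s n)
  rw [abs_mul, abs_mul, abs_of_pos (by positivity : (0 : ℝ) < n + 1)] at hrec
  rw [div_eq_div_iff hs1 (by positivity), hrec, mul_comm]

theorem Real.hasSum_multichoose_zero {s : ℝ} (hs : s < 0) (hs' : ∀ m : ℕ, s ≠ -m) :
    HasSum (Ring.multichoose s) 0 := by
  rw [(summable_multichoose hs hs').hasSum_iff_tendsto_nat, ← tendsto_add_atTop_iff_nat 1]
  simp only [Ring.sum_range_succ_multichoose]
  exact tendsto_multichoose_atTop_zero (by linarith) fun m h => hs' (m + 1) (by push_cast; linarith)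

theorem Real.hasSum_Gamma_sub_div_factorial_succ {β : ℝ} (hβ : 0 < β) (hβ' : ∀ m : ℕ, β ≠ m) :
    HasSum (fun q : ℕ => Gamma (q + 1 - β) / (Gamma (-β) * (q + 1)!)) (-1) := by
  have hs : ∀ m : ℕ, -β ≠ -m := fun m h => hβ' m (neg_inj.mp h)
  have h := (hasSum_nat_add_iff' 1).mpr (hasSum_multichoose_zero (neg_neg_of_pos hβ) hs)
  rw [zero_sub, sum_range_one, Ring.multichoose_zero_right] at h
  refine h.congr_fun fun q => ?_
  rw [← Gamma_add_nat_div_eq_multichoose hs]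
  push_cast
  ring_nf

end Multichoose

theorem Real.hasSum_multichoose_mul_pow (s : ℝ) {r : ℝ} (hr : |r| < 1) :
    HasSum (fun n => Ring.multichoose s n * r ^ n) ((1 - r) ^ (-s)) := by
  have h := (one_div_one_sub_rpow_hasFPowerSeriesOnBall_zero s).hasSum
    (y := r) (by simpa [edist_dist, ← ofReal_norm] using hr)
  simp only [FormalMultilinearSeries.ofScalars_apply_eq, smul_eq_mul, zero_add] at h
  rw [rpow_neg (by linarith [le_abs_self r]), inv_eq_one_div]
  simpa only [Ring.multichoose_eq] using h

theorem Real.hasSum_sub_rpow (β : ℝ) {u v : ℝ} (hu : 0 ≤ u) (huv : u < v) :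
    HasSum (fun n => Ring.multichoose (-β) n * v ^ (β - n) * u ^ n) ((v - u) ^ β) := by
  have hv : 0 < v := hu.trans_lt huv
  have hr : |u / v| < 1 := by
    rw [abs_of_nonneg (by positivity), div_lt_one hv]
    exact huv
  have h := (hasSum_multichoose_mul_pow (-β) hr).mul_left (v ^ β)
  rw [neg_neg, ← mul_rpow hv.le (by rw [sub_nonneg, div_le_one hv]; exact huv.le),
    mul_one_sub, mul_div_cancel₀ _ hv.ne'] at h
  refine h.congr_fun fun n => ?_
  rw [rpow_sub hv, rpow_natCast, div_pow]
  field_simp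

section RiemannLiouville

open MeasureTheory Set

theorem integral_norm_rpow_mul_pow_mul_le {α a t M : ℝ} {x : ℝ → ℝ} (hat : a < t)
    (hx : ContinuousOn x (Icc a t)) (hM : ∀ τ ∈ Icc a t, ‖x τ‖ ≤ M) (n : ℕ) :
    ∫ τ in Ioc a t, ‖(t - a) ^ (α - 1 - n) * ((τ - a) ^ n * x τ)‖ ≤
      M * (t - a) ^ α / (n + 1) := by
  have hta : 0 < t - a := sub_pos.2 hat
  calc ∫ τ in Ioc a t, ‖(t - a) ^ (α - 1 - n) * ((τ - a) ^ n * x τ)‖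
      ≤ ∫ τ in Ioc a t, (t - a) ^ (α - 1 - n) * ((τ - a) ^ n * M) := by
        refine setIntegral_mono_on
          ((ContinuousOn.integrableOn_Icc (by fun_prop)).mono_set Ioc_subset_Icc_self)
          ((ContinuousOn.integrableOn_Icc (by fun_prop)).mono_set Ioc_subset_Icc_self)
          measurableSet_Ioc fun τ hτ => ?_
        have hτa : 0 ≤ (τ - a) ^ n := pow_nonneg (sub_nonneg.2 hτ.1.le) n
        rw [norm_mul, norm_mul, norm_of_nonneg (rpow_nonneg hta.le _), norm_of_nonneg hτa]
        gcongr
        exact hM τ (Ioc_subset_Icc_self hτ)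
    _ = (t - a) ^ (α - 1 - n) * ((t - a) ^ (n + 1) / (n + 1) * M) := by
        rw [integral_const_mul, integral_mul_const, ← intervalIntegral.integral_of_le hat.le,
          intervalIntegral.integral_comp_sub_right fun τ => τ ^ n, integral_pow]
        simp
    _ = M * (t - a) ^ α / (n + 1) := by
        have hpow : (t - a) ^ (α - 1 - n) * (t - a) ^ (n + 1) = (t - a) ^ α := by
          rw [← rpow_natCast, ← rpow_add hta]
          push_cast
          ring_nf
        rw [← hpow]
        ring

theorem hasSum_rlIntLeft {α a t : ℝ} {x : ℝ → ℝ} (hα : 0 < α) (hα' : ∀ m : ℕ, α ≠ m)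
    (hat : a < t) (hx : ContinuousOn x (Icc a t)) :
    HasSum (fun n : ℕ => Ring.multichoose (1 - α) n / Gamma α * (t - a) ^ (α - 1 - n) *
      ∫ τ in a..t, (τ - a) ^ n * x τ) (rlIntLeft a α x t) := by
  set c : ℕ → ℝ := Ring.multichoose (1 - α)
  set F : ℕ → ℝ → ℝ := fun n τ => c n * ((t - a) ^ (α - 1 - n) * ((τ - a) ^ n * x τ)) with hF
  obtain ⟨M, hM⟩ := isCompact_Icc.exists_bound_of_continuousOn hx
  have hF_int : ∀ n, IntegrableOn (F n) (Ioc a t) := fun n =>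
    (ContinuousOn.integrableOn_Icc (by fun_prop)).mono_set Ioc_subset_Icc_self
  have hF_norm : ∀ n : ℕ, ∫ τ in Ioc a t, ‖F n τ‖ ≤ |c n| * (M * (t - a) ^ α / (n + 1)) :=
    fun n => by
      simp only [hF, norm_mul (c n), integral_const_mul, Real.norm_eq_abs (c n)]
      exact mul_le_mul_of_nonneg_left (integral_norm_rpow_mul_pow_mul_le hat hx hM n)
        (abs_nonneg _)
  have hsum : Summable fun n => ∫ τ in Ioc a t, ‖F n τ‖ := by
    refine Summable.of_nonneg_of_le (fun n => integral_nonneg fun _ => norm_nonneg _) hF_norm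
      (((summable_abs_multichoose_div_succ (s := 1 - α) (by linarith)
        fun m h => hα' m (by linarith)).mul_left (M * (t - a) ^ α)).congr fun n => ?_)
    ring
  have hF_tsum : ∀ τ ∈ Ioo a t, ∑' n, F n τ = (t - τ) ^ (α - 1) * x τ := fun τ hτ => by
    have h := (hasSum_sub_rpow (α - 1) (sub_nonneg.2 hτ.1.le) (sub_lt_sub_right hτ.2 a)).mul_right
      (x τ)
    rw [sub_sub_sub_cancel_right, neg_sub] at h
    exact (h.congr_fun fun n => by rw [hF]; ring).tsum_eq
  have h := (hasSum_integral_of_summable_integral_norm hF_int hsum).mul_left (Gamma α)⁻¹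
  rw [integral_Ioc_eq_integral_Ioo, setIntegral_congr_fun measurableSet_Ioo hF_tsum,
    ← integral_Ioc_eq_integral_Ioo, ← intervalIntegral.integral_of_le hat.le, ← one_div] at h
  refine h.congr_fun fun n => ?_
  rw [hF, integral_const_mul, integral_const_mul, intervalIntegral.integral_of_le hat.le]
  ring

end RiemannLiouville

theorem stmt8_general (α a b : ℝ) (n : ℕ) (hα : 0 < α) (hα' : ∀ k : ℤ, α ≠ (k : ℝ))
    (x : ℝ → ℝ) (hx : ContDiffOn ℝ n x (Set.Icc a b)) :
    ∀ t ∈ Set.Icc a b,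
      (∀ i : ℕ, i < n →
        Summable (fun q : ℕ =>
          Real.Gamma ((q : ℝ) + 1 - (i : ℝ) - α) /
            (Real.Gamma (-α - (i : ℝ)) * (Nat.factorial (q + 1) : ℝ)))) ∧
      HasSum
        (fun q : ℕ =>
          (Real.Gamma ((q : ℝ) + 1 - α) /
              (Real.Gamma α * Real.Gamma (1 - α) * (Nat.factorial (q + 1) : ℝ)))
            * (t - a) ^ (α - 1 - (q : ℝ))
            * ∫ τ in a..t, ((q : ℝ) + 1) * (τ - a) ^ q * x τ)
        (rlIntLeft a α x t
          - ∑ i ∈ Finset.range n,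
              ((1 / Real.Gamma (α + (i : ℝ) + 1)) *
                  (1 + ∑' q : ℕ,
                    Real.Gamma ((q : ℝ) + 1 - (i : ℝ) - α) /
                      (Real.Gamma (-α - (i : ℝ)) * (Nat.factorial (q + 1) : ℝ))))
                * (t - a) ^ (α + (i : ℝ)) * iteratedDeriv i x t) := by
  intro t ht
  have hbracket : ∀ i : ℕ, HasSum (fun q : ℕ => Gamma ((q : ℝ) + 1 - i - α) /
      (Gamma (-α - i) * (q + 1)!)) (-1) := fun i => by
    have h := hasSum_Gamma_sub_div_factorial_succ (β := α + i) (by positivity)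
      fun m h => hα' (m - i) (by push_cast; linarith)
    simpa only [sub_sub, neg_add', add_comm (i : ℝ)] using h
  refine ⟨fun i _ => (hbracket i).summable, ?_⟩
  simp only [(hbracket _).tsum_eq, add_neg_cancel, mul_zero, zero_mul, Finset.sum_const_zero,
    sub_zero]
  rcases ht.1.eq_or_lt with rfl | hat
  · simp [rlIntLeft]
  have h1α : ∀ m : ℕ, 1 - α ≠ -m := fun m h => hα' (m + 1) (by push_cast; linarith)
  refine (hasSum_rlIntLeft hα (fun m => hα' m) hat
    (hx.continuousOn.mono (Set.Icc_subset_Icc_right ht.2))).congr_fun fun q => ?_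
  simp_rw [mul_assoc _ _ (x _), intervalIntegral.integral_const_mul]
  rw [← Gamma_add_nat_div_eq_multichoose h1α, Nat.factorial_succ, show 1 - α + q = (q : ℝ) + 1 - α by ring]
  push_cast
  field_simp

/-- Series decomposition of the left Riemann–Liouville fractional integral of a `C^n`
function: for `t ∈ [a,b]`,
`_aI_t^α x(t) = ∑_{i=0}^{n−1} A_i(α)(t−a)^{α+i}x^{(i)}(t)
  + ∑_{p=n}^∞ B(α,p)(t−a)^{α+n−1−p}V_p(t)`,
with `A_i(α) = (1/Γ(α+i+1))[1 + ∑_{p=n−i}^∞ Γ(p−α−n+1)/(Γ(−α−i)(p−n+1+i)!)]`,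
`B(α,p) = Γ(p−α−n+1)/(Γ(α)Γ(1−α)(p−n+1)!)`,
`V_p(t) = ∫_a^t (p−n+1)(τ−a)^{p−n}x(τ) dτ`, the series (reindexed by `p = q + n`,
resp. `p = q + (n−i)`) being convergent. -/
theorem stmt8 (α a b : ℝ) (n : ℕ) (hα : 0 < α) (hα' : ∀ k : ℤ, α ≠ (k : ℝ))
    (hn : 1 ≤ n) (hab : a < b)
    (x : ℝ → ℝ) (hx : ContDiffOn ℝ n x (Set.Icc a b)) :
    ∀ t ∈ Set.Icc a b,
      (∀ i : ℕ, i < n →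
        Summable (fun q : ℕ =>
          Real.Gamma ((q : ℝ) + 1 - (i : ℝ) - α) /
            (Real.Gamma (-α - (i : ℝ)) * (Nat.factorial (q + 1) : ℝ)))) ∧
      HasSum
        (fun q : ℕ =>
          (Real.Gamma ((q : ℝ) + 1 - α) /
              (Real.Gamma α * Real.Gamma (1 - α) * (Nat.factorial (q + 1) : ℝ)))
            * (t - a) ^ (α - 1 - (q : ℝ))
            * ∫ τ in a..t, ((q : ℝ) + 1) * (τ - a) ^ q * x τ)
        (rlIntLeft a α x t
          - ∑ i ∈ Finset.range n,
              ((1 / Real.Gamma (α + (i : ℝ) + 1)) *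
                  (1 + ∑' q : ℕ,
                    Real.Gamma ((q : ℝ) + 1 - (i : ℝ) - α) /
                      (Real.Gamma (-α - (i : ℝ)) * (Nat.factorial (q + 1) : ℝ))))
                * (t - a) ^ (α + (i : ℝ)) * iteratedDeriv i x t) :=
  stmt8_general α a b n hα hα' x hx
end

section
/- Let α>0 be a non-integer real number, let n≥1 and i∈{0,…,n−1} be integers, and let N be an integer with N ≥ n. Then (1/Γ(α+i+1)) · ∑_{p=N+1}^∞ Γ(p−α−n+1)/(Γ(−α−i)·(p−n+1+i)!) = −(1/Γ(α+i+1)) · ∑_{p=0}^{N−n+1+i} Γ(p−α−i)/(Γ(−α−i)·p!), i.e. the tail of the series defining the coefficient A_i(α) of the decomposition of the left Riemann–Liouville fractional integral equals the negative of a finite partial sum. -/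
/-!
With `b = α + i`, the summands are `Γ(p - b) / (Γ(-b) p!) = (-1)^p (b choose p)`, the
coefficients of `(1 - x)^b`; at `x = 1` this binomial series sums to `0`, so every tail is minus
the complementary partial sum. Concretely, the Gamma recursion telescopes the partial sums to
`∏_{k<M} (1 - b/(k+1))`, which tends to `0` because `b > 0` and the harmonic series diverges.
For `p > b` all summands have the sign of `Γ(-b)`, so convergence of the partial sums already
gives summability.
-/

open Real Filter Finset Topology

lemma hasSum_of_tendsto_sum_range_of_eventually_nonneg {f : ℕ → ℝ} {l : ℝ}
    (hf : ∀ᶠ p in atTop, 0 ≤ f p)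
    (h : Tendsto (fun M ↦ ∑ p ∈ range M, f p) atTop (𝓝 l)) : HasSum f l := by
  obtain ⟨K, hf⟩ := eventually_atTop.mp hf
  rw [← hasSum_nat_add_iff' K, hasSum_iff_tendsto_nat_of_nonneg (fun q ↦ hf _ (by omega))]
  have hshift : ∀ M,
      ∑ q ∈ range M, f (q + K) = ∑ p ∈ range (M + K), f p - ∑ p ∈ range K, f p := by
    intro M
    rw [add_comm M K, sum_range_add]
    simp only [add_comm K, add_sub_cancel_left]
  simp only [hshift]
  exact ((tendsto_add_atTop_iff_nat K).mpr h).sub_const _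

lemma tendsto_prod_one_sub_of_tendsto_sum {a : ℕ → ℝ} (ha : ∀ k, a k ≤ 1)
    (h : Tendsto (fun M ↦ ∑ k ∈ range M, a k) atTop atTop) :
    Tendsto (fun M ↦ ∏ k ∈ range M, (1 - a k)) atTop (𝓝 0) := by
  have hle : ∀ M, ∏ k ∈ range M, (1 - a k) ≤ exp (-∑ k ∈ range M, a k) := by
    intro M
    rw [← sum_neg_distrib, exp_sum]
    exact prod_le_prod (fun k _ ↦ sub_nonneg.mpr (ha k))
      (fun k _ ↦ by linarith [add_one_le_exp (-a k)])
  exact squeeze_zero (fun M ↦ prod_nonneg fun k _ ↦ sub_nonneg.mpr (ha k)) hle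
    (tendsto_exp_atBot.comp (tendsto_neg_atTop_atBot.comp h))

lemma tendsto_prod_one_sub_div_nat_succ {b : ℝ} (hb : 0 < b) :
    Tendsto (fun M ↦ ∏ k ∈ range M, (1 - b / ((k : ℝ) + 1))) atTop (𝓝 0) := by
  obtain ⟨K, hK⟩ := exists_nat_gt b
  set a : ℕ → ℝ := fun k ↦ b / (((K + k : ℕ) : ℝ) + 1)
  have htail : Tendsto (fun M ↦ ∏ k ∈ range M, (1 - a k)) atTop (𝓝 0) := by
    refine tendsto_prod_one_sub_of_tendsto_sum (fun k ↦ ?_) ?_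
    · rw [div_le_one (by positivity)]
      push_cast
      linarith [k.cast_nonneg (α := ℝ)]
    · rw [← not_summable_iff_tendsto_nat_atTop_of_nonneg (fun k ↦ by positivity)]
      have hharm := mt (summable_nat_add_iff (K + 1)).mp not_summable_one_div_natCast
      contrapose! hharm
      refine (hharm.mul_left b⁻¹).congr fun k ↦ ?_
      simp only [a]
      push_cast
      field_simp
      ring
  rw [← tendsto_add_atTop_iff_nat K, ← mul_zero (∏ k ∈ range K, (1 - b / ((k : ℝ) + 1)))]
  simp only [add_comm _ K, prod_range_add]
  exact tendsto_const_nhds.mul htail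

noncomputable def oneSubPowCoeff (b : ℝ) (p : ℕ) : ℝ :=
  Gamma (p - b) / (Gamma (-b) * p.factorial)

section Gamma

variable {b : ℝ}

lemma Gamma_intCast_sub_ne_zero (hb : ∀ k : ℤ, b ≠ k) (k : ℤ) : Gamma (k - b) ≠ 0 :=
  Gamma_ne_zero fun m h ↦ hb (k + m) (by push_cast; linarith)

lemma Gamma_natCast_succ_sub (hb : ∀ k : ℤ, b ≠ k) (m : ℕ) :
    Gamma ((m + 1 : ℕ) - b) = (m - b) * Gamma (m - b) := by
  rw [← Gamma_add_one (fun h ↦ hb m (by push_cast; linarith))]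
  push_cast
  ring_nf

lemma sum_range_succ_oneSubPowCoeff (hb : ∀ k : ℤ, b ≠ k) (M : ℕ) :
    ∑ p ∈ range (M + 1), oneSubPowCoeff b p =
      Gamma ((M + 1 : ℕ) - b) / (Gamma (1 - b) * M.factorial) := by
  have hG0 : Gamma (-b) ≠ 0 := by simpa using Gamma_intCast_sub_ne_zero hb 0
  have hG1 : Gamma (1 - b) = -b * Gamma (-b) := by
    simpa using Gamma_natCast_succ_sub hb 0
  have hb0 : b ≠ 0 := by simpa using hb 0
  induction M with
  | zero => simp [oneSubPowCoeff, hG0, hG1, hb0]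
  | succ M ih =>
    rw [sum_range_succ, ih, oneSubPowCoeff, Gamma_natCast_succ_sub hb (M + 1), hG1,
      Nat.factorial_succ]
    push_cast
    field_simp
    ring

lemma Gamma_div_eq_prod_one_sub (hb : ∀ k : ℤ, b ≠ k) (M : ℕ) :
    Gamma ((M + 1 : ℕ) - b) / (Gamma (1 - b) * M.factorial) =
      ∏ k ∈ range M, (1 - b / (k + 1)) := by
  have hG1 : Gamma (1 - b) ≠ 0 := by simpa using Gamma_intCast_sub_ne_zero hb 1
  induction M with
  | zero => simp [hG1]
  | succ M ih =>
    rw [prod_range_succ, ← ih, Gamma_natCast_succ_sub hb (M + 1), Nat.factorial_succ]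
    push_cast
    field_simp

lemma tendsto_sum_range_oneSubPowCoeff (hb : ∀ k : ℤ, b ≠ k) (hb0 : 0 < b) :
    Tendsto (fun M ↦ ∑ p ∈ range M, oneSubPowCoeff b p) atTop (𝓝 0) := by
  rw [← tendsto_add_atTop_iff_nat 1]
  simp only [sum_range_succ_oneSubPowCoeff hb, Gamma_div_eq_prod_one_sub hb]
  exact tendsto_prod_one_sub_div_nat_succ hb0

lemma hasSum_oneSubPowCoeff (hb : ∀ k : ℤ, b ≠ k) (hb0 : 0 < b) :
    HasSum (oneSubPowCoeff b) 0 := by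
  have hG0 : Gamma (-b) ≠ 0 := by simpa using Gamma_intCast_sub_ne_zero hb 0
  obtain ⟨K, hK⟩ := exists_nat_gt b
  have hscaled : HasSum (fun p ↦ Gamma (-b) * oneSubPowCoeff b p) 0 := by
    refine hasSum_of_tendsto_sum_range_of_eventually_nonneg
      (eventually_atTop.mpr ⟨K, fun p hp ↦ ?_⟩) ?_
    · have hpb : 0 < (p : ℝ) - b := by
        have : (K : ℝ) ≤ p := by exact_mod_cast hp
        linarith
      have hcancel : Gamma (-b) * oneSubPowCoeff b p = Gamma (p - b) / p.factorial := by
        rw [oneSubPowCoeff]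
        field_simp
      rw [hcancel]
      exact div_nonneg (Gamma_pos_of_pos hpb).le (Nat.cast_nonneg _)
    · simpa [← mul_sum] using (tendsto_sum_range_oneSubPowCoeff hb hb0).const_mul (Gamma (-b))
  simpa [hG0] using hscaled.mul_left (Gamma (-b))⁻¹

lemma tsum_oneSubPowCoeff_nat_add (hb : ∀ k : ℤ, b ≠ k) (hb0 : 0 < b) (M : ℕ) :
    ∑' q, oneSubPowCoeff b (M + q) = -∑ p ∈ range M, oneSubPowCoeff b p := by
  have := (hasSum_nat_add_iff' M).mpr (hasSum_oneSubPowCoeff hb hb0)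
  simpa [add_comm] using this.tsum_eq

end Gamma

theorem stmt11_general (α : ℝ) (n i N : ℕ) (hα : 0 < α) (hα' : ∀ k : ℤ, α ≠ (k : ℝ))
    (hN : n ≤ N) :
    (1 / Real.Gamma (α + (i : ℝ) + 1)) *
        ∑' q : ℕ,
          Real.Gamma (((N : ℝ) + 1 + (q : ℝ)) - α - (n : ℝ) + 1) /
            (Real.Gamma (-α - (i : ℝ)) * (Nat.factorial (N + 2 + q + i - n) : ℝ))
      = -(1 / Real.Gamma (α + (i : ℝ) + 1)) *
          ∑ p ∈ Finset.range (N + i + 2 - n),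
            Real.Gamma ((p : ℝ) - α - (i : ℝ)) /
              (Real.Gamma (-α - (i : ℝ)) * (Nat.factorial p : ℝ)) := by
  have hb0 : 0 < α + i := by positivity
  have hb : ∀ k : ℤ, α + i ≠ k := fun k h ↦ hα' (k - i) (by push_cast; linarith)
  have htail : ∀ q : ℕ,
      Real.Gamma (((N : ℝ) + 1 + (q : ℝ)) - α - (n : ℝ) + 1) /
        (Real.Gamma (-α - (i : ℝ)) * (Nat.factorial (N + 2 + q + i - n) : ℝ))
      = oneSubPowCoeff (α + i) (N + i + 2 - n + q) := by
    intro q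
    rw [oneSubPowCoeff, show N + 2 + q + i - n = N + i + 2 - n + q by omega]
    push_cast [show n ≤ N + i + 2 by omega]
    ring_nf
  have hhead : ∀ p : ℕ, Real.Gamma ((p : ℝ) - α - (i : ℝ)) /
      (Real.Gamma (-α - (i : ℝ)) * (Nat.factorial p : ℝ)) = oneSubPowCoeff (α + i) p := by
    intro p
    rw [oneSubPowCoeff, sub_add_eq_sub_sub, neg_add']
  rw [tsum_congr htail, tsum_oneSubPowCoeff_nat_add hb hb0, sum_congr rfl fun p _ ↦ hhead p]
  ring

/-- Tail identity for the coefficient `A_i(α)` of the series decomposition of the left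
Riemann–Liouville fractional integral: for `α>0` non-integer, integers `n ≥ 1`,
`0 ≤ i ≤ n−1` and `N ≥ n`,
`(1/Γ(α+i+1)) ∑_{p=N+1}^∞ Γ(p−α−n+1)/(Γ(−α−i)(p−n+1+i)!)
  = −(1/Γ(α+i+1)) ∑_{p=0}^{N−n+1+i} Γ(p−α−i)/(Γ(−α−i) p!)`
(the infinite tail is reindexed by `p = N+1+q`, `q ∈ ℕ`). -/
theorem stmt11 (α : ℝ) (n i N : ℕ) (hα : 0 < α) (hα' : ∀ k : ℤ, α ≠ (k : ℝ))
    (hn : 1 ≤ n) (hi : i ≤ n - 1) (hN : n ≤ N) :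
    (1 / Real.Gamma (α + (i : ℝ) + 1)) *
        ∑' q : ℕ,
          Real.Gamma (((N : ℝ) + 1 + (q : ℝ)) - α - (n : ℝ) + 1) /
            (Real.Gamma (-α - (i : ℝ)) * (Nat.factorial (N + 2 + q + i - n) : ℝ))
      = -(1 / Real.Gamma (α + (i : ℝ) + 1)) *
          ∑ p ∈ Finset.range (N + i + 2 - n),
            Real.Gamma ((p : ℝ) - α - (i : ℝ)) /
              (Real.Gamma (-α - (i : ℝ)) * (Nat.factorial p : ℝ)) :=
  stmt11_general α n i N hα hα' hN
end

section
/- Let α>0 be a non-integer real number, let n∈ℕ, let 0<a<b and let x:[a,b]→ℝ be of class C^{n+1}. Define x_{0,0}=x and x_{k+1,0}(t)=t·(d/dt)x_{k,0}(t) for k≥0. Then for every t∈(a,b], _a𝓘_t^α x(t) = ∑_{i=0}^n A_i(α)·(ln(t/a))^{α+i}·x_{i,0}(t) + ∑_{p=n+1}^∞ B(α,p)·(ln(t/a))^{α+n−p}·V_p(t), where A_i(α) = (1/Γ(α+i+1))·[1 + ∑_{p=n−i+1}^∞ Γ(p−α−n)/(Γ(−α−i)·(p−n+i)!)], B(α,p)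 = Γ(p−α−n)/(Γ(α)·Γ(1−α)·(p−n)!), and V_p(t) = ∫_a^t (p−n)·(ln(τ/a))^{p−n−1}·x(τ)/τ dτ, the series being convergent. -/
/-!
Write `C(β, k)` for `Ring.choose β k`. Since `Γ(s + k) / (Γ(s) k!) = (-1)^k C(-s, k)`, the bracket
in `A_i(α)` is `∑_{k ≥ 0} (-1)^k C(α + i, k)`, the value of the binomial series of `(1 - x)^(α + i)`
at `x = 1`; it vanishes by Abel's theorem, the series converging absolutely because Euler's limit
formula for `Γ(-β)` gives `|C(β, k)| = O(k^(-1-β))`. So every `A_i(α)` is zero and it remains to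
expand the Hadamard integral itself: with `L = ln(t/a)` and `l = ln(τ/a)` we have
`ln(t/τ) = L - l`, and for `0 ≤ l < L` the binomial series
`(L - l)^(α-1) = ∑_q (-1)^q C(α-1, q) L^(α-1-q) l^q` may be integrated term by term, the `q`-th
term having `L¹`-norm at most `M L^α |C(α, q+1)| / Γ(α+1)` with `M = sup |x|`. The resulting
coefficient `(-1)^q C(α, q+1) / Γ(α+1)` is `B(α, p)` for `p = q + n + 1`, by the same Gamma
identity and `Γ(1 - α) = -α Γ(-α)`.
-/

/-- Left Hadamard fractional integral of order `α`:
`_a𝓘_t^α x(t) = (1/Γ(α)) ∫_a^t (ln(t/τ))^{α−1} · x(τ)/τ dτ`. -/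
noncomputable def hadIntLeft (a α : ℝ) (x : ℝ → ℝ) (t : ℝ) : ℝ :=
  (1 / Real.Gamma α) * ∫ τ in a..t, Real.log (t / τ) ^ (α - 1) * x τ / τ

/-- The sequence `x_{k,0}`: `x_{0,0} = x`, `x_{k+1,0}(t) = t · (d/dt) x_{k,0}(t)`. -/
noncomputable def xSeq0 (x : ℝ → ℝ) : ℕ → ℝ → ℝ
  | 0 => x
  | (k + 1) => fun t => t * deriv (xSeq0 x k) t

open Finset Filter Topology Set MeasureTheory
open scoped Nat

namespace Ring

theorem choose_real_eq_prod_div (β : ℝ) (k : ℕ) :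
    choose β k = (∏ j ∈ range k, (β - j)) / k ! := by
  rw [choose_eq_smul, ← Polynomial.aeval_eq_smeval, Polynomial.aeval_def,
    Polynomial.eval₂_eq_eval_map, descPochhammer_map, descPochhammer_eval_eq_prod_range,
    smul_eq_mul, inv_mul_eq_div]

theorem choose_real_succ_mul (β : ℝ) (k : ℕ) :
    choose β (k + 1) * (k + 1) = β * choose (β - 1) k := by
  rw [choose_real_eq_prod_div, choose_real_eq_prod_div, prod_range_succ', Nat.factorial_succ]
  push_cast
  simp only [sub_add_eq_sub_sub_swap, sub_zero]
  field_simp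

end Ring

theorem prod_range_add_eq_choose_neg (s : ℝ) (k : ℕ) :
    ∏ j ∈ range k, (s + j) = (-1) ^ k * k ! * Ring.choose (-s) k := by
  have hsign := prod_neg (s := range k) (f := fun j : ℕ => -s - j)
  rw [card_range] at hsign
  rw [Ring.choose_real_eq_prod_div, mul_assoc, mul_div_cancel₀ _ (by positivity), ← hsign]
  exact prod_congr rfl fun j _ => by ring

theorem Real.Gamma_add_nat_eq_prod_mul {s : ℝ} (hs : ∀ m : ℕ, s ≠ -m) (k : ℕ) :
    Real.Gamma (s + k) = (∏ j ∈ range k, (s + j)) * Real.Gamma s := by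
  induction k with
  | zero => simp
  | succ k ih =>
    have hk : s + k ≠ 0 := fun h => hs k (by linarith)
    rw [Nat.cast_succ, ← add_assoc, Real.Gamma_add_one hk, ih, prod_range_succ]
    ring

theorem Real.Gamma_add_nat_div_mul_factorial {s : ℝ} (hs : ∀ m : ℕ, s ≠ -m) (k : ℕ) :
    Real.Gamma (s + k) / (Real.Gamma s * k !) = (-1) ^ k * Ring.choose (-s) k := by
  have hΓ : Real.Gamma s ≠ 0 := Real.Gamma_ne_zero hs
  rw [Real.Gamma_add_nat_eq_prod_mul hs, prod_range_add_eq_choose_neg]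
  field_simp

theorem hasSum_choose_mul_pow (β : ℝ) {y : ℝ} (hy : |y| < 1) :
    HasSum (fun k => Ring.choose β k * y ^ k) ((1 + y) ^ β) := by
  have := Real.one_add_rpow_hasFPowerSeriesOnBall_zero (a := β) |>.hasSum (y := y) (by
    simpa [Metric.mem_eball, edist_dist, Real.dist_eq] using hy)
  simpa [binomialSeries, FormalMultilinearSeries.ofScalars_apply_eq, mul_comm] using this

theorem abs_choose_succ_mul_GammaSeq {β : ℝ} (hβ : ∀ m : ℕ, β ≠ m) (n : ℕ) :
    |Ring.choose β (n + 1)| * ((n + 1) * |Real.GammaSeq (-β) n|) = (n : ℝ) ^ (-β) := by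
  have hchoose : Ring.choose β (n + 1) ≠ 0 := by
    rw [Ring.choose_real_eq_prod_div]
    exact div_ne_zero (prod_ne_zero_iff.mpr fun j _ => sub_ne_zero.mpr (hβ j)) (by positivity)
  rw [Real.GammaSeq, prod_range_add_eq_choose_neg, neg_neg, Nat.factorial_succ]
  simp only [abs_div, abs_mul, abs_pow, abs_neg, abs_one, one_pow, one_mul, Nat.abs_cast,
    abs_of_nonneg (Real.rpow_nonneg n.cast_nonneg _)]
  push_cast
  field_simp

theorem summable_abs_choose {β : ℝ} (hβ : 0 < β) (hβ' : ∀ m : ℕ, β ≠ m) :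
    Summable fun k => |Ring.choose β k| := by
  have hΓ : Real.Gamma (-β) ≠ 0 := Real.Gamma_ne_zero fun m h => hβ' m (by linarith)
  have hlim : ∀ᶠ n : ℕ in atTop, |Real.Gamma (-β)| / 2 ≤ |Real.GammaSeq (-β) n| :=
    ((Real.GammaSeq_tendsto_Gamma (-β)).abs.eventually
      (eventually_ge_nhds (half_lt_self (abs_pos.mpr hΓ))))
  have hbound :
      (fun n : ℕ => |Ring.choose β (n + 1)|) =O[atTop] fun n : ℕ => (n : ℝ) ^ (-β - 1) := by
    refine Asymptotics.IsBigO.of_bound (2 / |Real.Gamma (-β)|) ?_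
    filter_upwards [hlim, eventually_ge_atTop 1] with n hn hn1
    have hn0 : (0 : ℝ) < n := by exact_mod_cast hn1
    have hP : (n : ℝ) * (|Real.Gamma (-β)| / 2) ≤ (n + 1) * |Real.GammaSeq (-β) n| :=
      mul_le_mul (by linarith) hn (by positivity) (by positivity)
    have hPpos : 0 < (n : ℝ) * (|Real.Gamma (-β)| / 2) := by positivity
    rw [Real.norm_of_nonneg (abs_nonneg _), Real.norm_of_nonneg (by positivity),
      Real.rpow_sub_one hn0.ne', eq_div_of_mul_eq (hPpos.trans_le hP).ne'
        (abs_choose_succ_mul_GammaSeq hβ' n)]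
    calc (n : ℝ) ^ (-β) / ((n + 1) * |Real.GammaSeq (-β) n|)
        ≤ (n : ℝ) ^ (-β) / (n * (|Real.Gamma (-β)| / 2)) := by gcongr
      _ = 2 / |Real.Gamma (-β)| * ((n : ℝ) ^ (-β) / n) := by field_simp
  refine (summable_nat_add_iff 1).mp (summable_of_isBigO_nat ?_ hbound)
  exact Real.summable_nat_rpow.mpr (by linarith)

theorem hasSum_neg_one_pow_mul_choose {β : ℝ} (hβ : 0 < β) (hβ' : ∀ m : ℕ, β ≠ m) :
    HasSum (fun k => (-1) ^ k * Ring.choose β k) 0 := by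
  have hsum : Summable fun k => (-1) ^ k * Ring.choose β k :=
    (summable_abs_choose hβ hβ').of_norm_bounded fun k => by simp
  have habel := Real.tendsto_tsum_powerSeries_nhdsWithin_lt hsum.hasSum.tendsto_sum_nat
  have hval : ∀ᶠ x in 𝓝[<] (1 : ℝ), ∑' k, (-1) ^ k * Ring.choose β k * x ^ k = (1 - x) ^ β := by
    filter_upwards [Ioo_mem_nhdsLT (show (0 : ℝ) < 1 by norm_num)] with x hx
    have hx' : |-x| < 1 := by rw [abs_neg, abs_of_pos hx.1]; exact hx.2
    rw [sub_eq_add_neg, ← (hasSum_choose_mul_pow β hx').tsum_eq]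
    exact tsum_congr fun k => by rw [neg_pow]; ring
  have hlim : Tendsto (fun x : ℝ => (1 - x) ^ β) (𝓝[<] 1) (𝓝 0) := by
    have hcont : Continuous fun x : ℝ => (1 - x) ^ β :=
      (continuous_const.sub continuous_id).rpow_const fun _ => Or.inr hβ.le
    simpa [Real.zero_rpow hβ.ne'] using (hcont.tendsto 1).mono_left nhdsWithin_le_nhds
  rw [← tendsto_nhds_unique habel (hlim.congr' (EventuallyEq.symm hval))]
  exact hsum.hasSum

theorem hasSum_sub_rpow (γ : ℝ) {L l : ℝ} (hl : 0 ≤ l) (hlL : l < L) :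
    HasSum (fun q : ℕ => (-1) ^ q * Ring.choose γ q * L ^ (γ - q) * l ^ q) ((L - l) ^ γ) := by
  have hL : 0 < L := hl.trans_lt hlL
  have hy : |-(l / L)| < 1 := by
    rw [abs_neg, abs_of_nonneg (by positivity), div_lt_one hL]; exact hlL
  have hsub : L - l = L * (1 + -(l / L)) := by field_simp; ring
  rw [hsub, Real.mul_rpow hL.le (by linarith [(abs_lt.mp hy).1])]
  refine ((hasSum_choose_mul_pow γ hy).mul_left (L ^ γ)).congr_fun fun q => ?_
  rw [Real.rpow_sub_natCast hL.ne', neg_pow (l / L), div_pow]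
  field_simp

theorem integral_mul_log_div_pow_div {a t : ℝ} (ha : 0 < a) (hat : a ≤ t) (q : ℕ) :
    ∫ τ in a..t, (q + 1) * Real.log (τ / a) ^ q / τ = Real.log (t / a) ^ (q + 1) := by
  have hpos : ∀ τ ∈ uIcc a t, 0 < τ := fun τ hτ =>
    ha.trans_le (by rw [uIcc_of_le hat] at hτ; exact hτ.1)
  have hderiv : ∀ τ ∈ uIcc a t,
      HasDerivAt (fun s => Real.log (s / a) ^ (q + 1)) ((q + 1) * Real.log (τ / a) ^ q / τ) τ := by
    intro τ hτ
    have hlog : HasDerivAt (fun s => Real.log (s / a)) τ⁻¹ τ := by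
      have := ((hasDerivAt_id' τ).div_const a).log (div_pos (hpos τ hτ) ha).ne'
      rwa [div_div_div_cancel_right₀ ha.ne', one_div] at this
    refine (hlog.pow (q + 1)).congr_deriv ?_
    rw [Nat.add_sub_cancel]
    push_cast
    ring
  have hlogc : ContinuousOn (fun τ => Real.log (τ / a)) (uIcc a t) :=
    (continuousOn_id.div_const a).log fun τ hτ => (div_pos (hpos τ hτ) ha).ne'
  have hcont : ContinuousOn (fun τ => (q + 1) * Real.log (τ / a) ^ q / τ) (uIcc a t) :=
    (continuousOn_const.mul (hlogc.pow q)).div continuousOn_id fun τ hτ => (hpos τ hτ).ne'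
  rw [intervalIntegral.integral_eq_sub_of_hasDerivAt hderiv hcont.intervalIntegrable,
    div_self ha.ne', Real.log_one, zero_pow q.succ_ne_zero, sub_zero]

theorem hasSum_log_div_rpow {α a τ t : ℝ} (hα : 0 < α) (ha : 0 < a) (haτ : a ≤ τ)
    (hτt : τ < t) :
    HasSum (fun q : ℕ => (-1) ^ q * Ring.choose α (q + 1) / Real.Gamma (α + 1) *
        Real.log (t / a) ^ (α - 1 - q) * ((q + 1) * Real.log (τ / a) ^ q))
      (Real.log (t / τ) ^ (α - 1) / Real.Gamma α) := by
  have hτ : 0 < τ := ha.trans_le haτ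
  have hl : 0 ≤ Real.log (τ / a) := Real.log_nonneg ((one_le_div ha).mpr haτ)
  have hlL : Real.log (τ / a) < Real.log (t / a) :=
    Real.log_lt_log (div_pos hτ ha) (div_lt_div_of_pos_right hτt ha)
  have hlog : Real.log (t / τ) = Real.log (t / a) - Real.log (τ / a) := by
    rw [← Real.log_div (div_pos (hτ.trans hτt) ha).ne' (div_pos hτ ha).ne',
      div_div_div_cancel_right₀ ha.ne']
  have hΓ : Real.Gamma (α + 1) = α * Real.Gamma α := Real.Gamma_add_one hα.ne'
  have hΓα : Real.Gamma α ≠ 0 := (Real.Gamma_pos_of_pos hα).ne'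
  rw [hlog]
  refine ((hasSum_sub_rpow (α - 1) hl hlL).div_const (Real.Gamma α)).congr_fun fun q => ?_
  have hchoose := Ring.choose_real_succ_mul α q
  rw [hΓ]
  field_simp
  linear_combination Real.log (t / a) ^ (α - 1 - q) * Real.log (τ / a) ^ q * hchoose

theorem continuousOn_log_div_pow_mul_div {a t : ℝ} {x : ℝ → ℝ} (ha : 0 < a)
    (hx : ContinuousOn x (Icc a t)) (q : ℕ) :
    ContinuousOn (fun τ => (q + 1) * Real.log (τ / a) ^ q * x τ / τ) (Icc a t) := by
  have hpos : ∀ τ ∈ Icc a t, 0 < τ := fun τ hτ => ha.trans_le hτ.1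
  have hlogc : ContinuousOn (fun τ => Real.log (τ / a)) (Icc a t) :=
    (continuousOn_id.div_const a).log fun τ hτ => (div_pos (hpos τ hτ) ha).ne'
  exact ((continuousOn_const.mul (hlogc.pow q)).mul hx).div continuousOn_id
    fun τ hτ => (hpos τ hτ).ne'

theorem integral_norm_log_div_pow_mul_div_le {a t M : ℝ} {x : ℝ → ℝ} (ha : 0 < a) (hat : a ≤ t)
    (hM : ∀ τ ∈ Icc a t, ‖x τ‖ ≤ M) (q : ℕ) :
    ∫ τ in Ioc a t, ‖(q + 1) * Real.log (τ / a) ^ q * x τ / τ‖ ≤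
      M * Real.log (t / a) ^ (q + 1) := by
  have hbound : ∀ τ ∈ Ioc a t,
      ‖(q + 1) * Real.log (τ / a) ^ q * x τ / τ‖ ≤ M * ((q + 1) * Real.log (τ / a) ^ q / τ) := by
    intro τ hτ
    have hτ0 : 0 < τ := ha.trans hτ.1
    have hl : 0 ≤ Real.log (τ / a) := Real.log_nonneg ((one_le_div ha).mpr hτ.1.le)
    rw [norm_div, norm_mul, Real.norm_of_nonneg (by positivity), Real.norm_of_nonneg hτ0.le]
    calc (q + 1) * Real.log (τ / a) ^ q * ‖x τ‖ / τ
        ≤ (q + 1) * Real.log (τ / a) ^ q * M / τ := by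
          gcongr; exact hM τ (Ioc_subset_Icc_self hτ)
      _ = M * ((q + 1) * Real.log (τ / a) ^ q / τ) := by ring
  have hint : IntegrableOn (fun τ => M * ((q + 1) * Real.log (τ / a) ^ q / τ)) (Ioc a t) := by
    have := continuousOn_log_div_pow_mul_div (t := t) ha (continuousOn_const (c := M)) q
    refine (this.integrableOn_Icc.mono_set Ioc_subset_Icc_self).congr_fun (fun τ _ => ?_)
      measurableSet_Ioc
    ring
  calc ∫ τ in Ioc a t, ‖(q + 1) * Real.log (τ / a) ^ q * x τ / τ‖
      ≤ ∫ τ in Ioc a t, M * ((q + 1) * Real.log (τ / a) ^ q / τ) :=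
        integral_mono_of_nonneg (Eventually.of_forall fun _ => norm_nonneg _) hint
          ((ae_restrict_iff' measurableSet_Ioc).mpr (Eventually.of_forall hbound))
    _ = M * Real.log (t / a) ^ (q + 1) := by
        rw [integral_const_mul, ← intervalIntegral.integral_of_le hat,
          integral_mul_log_div_pow_div ha hat]

theorem abs_mul_rpow_sub_mul_pow {L : ℝ} (hL : 0 < L) (c α : ℝ) (q : ℕ) :
    |c * L ^ (α - 1 - q)| * L ^ (q + 1) = |c| * L ^ α := by
  rw [abs_mul, abs_of_pos (Real.rpow_pos_of_pos hL _), mul_assoc, ← Real.rpow_natCast,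
    ← Real.rpow_add hL]
  push_cast
  ring_nf

theorem hasSum_hadIntLeft {α a t : ℝ} {x : ℝ → ℝ} (hα : 0 < α) (hα' : ∀ m : ℕ, α ≠ m)
    (ha : 0 < a) (hat : a < t) (hx : ContinuousOn x (Icc a t)) :
    HasSum (fun q : ℕ => (-1) ^ q * Ring.choose α (q + 1) / Real.Gamma (α + 1) *
        Real.log (t / a) ^ (α - 1 - q) * ∫ τ in a..t, (q + 1) * Real.log (τ / a) ^ q * x τ / τ)
      (hadIntLeft a α x t) := by
  set L := Real.log (t / a)
  set b : ℕ → ℝ := fun q => (-1) ^ q * Ring.choose α (q + 1) / Real.Gamma (α + 1)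
  set V : ℕ → ℝ → ℝ := fun q τ => (q + 1) * Real.log (τ / a) ^ q * x τ / τ
  have hL : 0 < L := Real.log_pos ((one_lt_div ha).mpr hat)
  obtain ⟨M, hM⟩ := isCompact_Icc.exists_bound_of_continuousOn hx
  have hint : ∀ q, IntegrableOn (fun τ => b q * L ^ (α - 1 - q) * V q τ) (Ioc a t) := fun q =>
    (((continuousOn_log_div_pow_mul_div ha hx q).integrableOn_Icc).mono_set
      Ioc_subset_Icc_self).const_mul _
  have hnorm : ∀ q, ∫ τ in Ioc a t, ‖b q * L ^ (α - 1 - q) * V q τ‖ ≤ M * L ^ α * |b q| := by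
    intro q
    simp only [norm_mul (b q * L ^ (α - 1 - q)), integral_const_mul, Real.norm_eq_abs]
    calc |b q * L ^ (α - 1 - q)| * ∫ τ in Ioc a t, |V q τ|
        ≤ |b q * L ^ (α - 1 - q)| * (M * L ^ (q + 1)) :=
          mul_le_mul_of_nonneg_left (integral_norm_log_div_pow_mul_div_le ha hat.le hM q)
            (abs_nonneg _)
      _ = M * L ^ α * |b q| := by
          rw [mul_left_comm, abs_mul_rpow_sub_mul_pow hL]; ring
  have hb : Summable fun q => |b q| := by
    simpa [b, abs_mul, abs_div] using
      ((summable_nat_add_iff 1).mpr (summable_abs_choose hα hα')).div_const |Real.Gamma (α + 1)|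
  have hpt : ∀ᵐ τ ∂volume.restrict (Ioc a t), ∑' q, b q * L ^ (α - 1 - q) * V q τ =
      1 / Real.Gamma α * (Real.log (t / τ) ^ (α - 1) * x τ / τ) := by
    rw [← restrict_Ioo_eq_restrict_Ioc, ae_restrict_iff' measurableSet_Ioo]
    refine Eventually.of_forall fun τ hτ => ?_
    refine (((hasSum_log_div_rpow hα ha hτ.1.le hτ.2).mul_right (x τ / τ)).congr_fun
      fun q => ?_).tsum_eq.trans ?_
    · simp only [b, V]; ring
    · ring
  have := hasSum_integral_of_summable_integral_norm hint
    (.of_nonneg_of_le (fun q => integral_nonneg fun _ => norm_nonneg _) hnorm (hb.mul_left _))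
  rw [integral_congr_ae hpt, integral_const_mul, ← intervalIntegral.integral_of_le hat.le] at this
  refine this.congr_fun fun q => ?_
  rw [intervalIntegral.integral_of_le hat.le, ← integral_const_mul]

theorem hasSum_Gamma_sub_div_Gamma_neg_mul_factorial {β : ℝ} (hβ : 0 < β)
    (hβ' : ∀ m : ℕ, β ≠ m) :
    HasSum (fun q : ℕ => Real.Gamma (q + 1 - β) / (Real.Gamma (-β) * (q + 1)!)) (-1) := by
  have hs : ∀ m : ℕ, -β ≠ -m := fun m h => hβ' m (neg_injective h)
  have hshift := (hasSum_nat_add_iff' 1).mpr (hasSum_neg_one_pow_mul_choose hβ hβ')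
  simp only [sum_range_one, pow_zero, Ring.choose_zero_right, mul_one, zero_sub] at hshift
  refine hshift.congr_fun fun q => ?_
  rw [← neg_neg β, ← Real.Gamma_add_nat_div_mul_factorial hs (q + 1), neg_neg]
  push_cast
  ring_nf

theorem Gamma_sub_div_Gamma_mul_Gamma_one_sub {α : ℝ} (hα : 0 < α) (hα' : ∀ m : ℕ, α ≠ m)
    (q : ℕ) :
    Real.Gamma (q + 1 - α) / (Real.Gamma α * Real.Gamma (1 - α) * (q + 1)!) =
      (-1) ^ q * Ring.choose α (q + 1) / Real.Gamma (α + 1) := by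
  have hs : ∀ m : ℕ, -α ≠ -m := fun m h => hα' m (neg_injective h)
  have hΓα := (Real.Gamma_pos_of_pos hα).ne'
  have hΓ := Real.Gamma_ne_zero hs
  have hterm := Real.Gamma_add_nat_div_mul_factorial hs (q + 1)
  rw [neg_neg, Nat.cast_succ, neg_add_eq_sub, div_eq_iff (by positivity)] at hterm
  rw [show 1 - α = -α + 1 by ring, Real.Gamma_add_one (neg_ne_zero.mpr hα.ne'),
    Real.Gamma_add_one hα.ne', hterm]
  field_simp
  ring

theorem stmt13_general (α a b : ℝ) (n : ℕ) (hα : 0 < α) (hα' : ∀ k : ℤ, α ≠ (k : ℝ))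
    (ha : 0 < a)
    (x : ℝ → ℝ) (hx : ContDiffOn ℝ (n + 1) x (Set.Icc a b)) :
    ∀ t ∈ Set.Ioc a b,
      (∀ i : ℕ, i ≤ n →
        Summable (fun q : ℕ =>
          Real.Gamma ((q : ℝ) + 1 - (i : ℝ) - α) /
            (Real.Gamma (-α - (i : ℝ)) * (Nat.factorial (q + 1) : ℝ)))) ∧
      HasSum
        (fun q : ℕ =>
          (Real.Gamma ((q : ℝ) + 1 - α) /
              (Real.Gamma α * Real.Gamma (1 - α) * (Nat.factorial (q + 1) : ℝ)))
            * Real.log (t / a) ^ (α - 1 - (q : ℝ))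
            * ∫ τ in a..t, ((q : ℝ) + 1) * Real.log (τ / a) ^ q * x τ / τ)
        (hadIntLeft a α x t
          - ∑ i ∈ Finset.range (n + 1),
              ((1 / Real.Gamma (α + (i : ℝ) + 1)) *
                  (1 + ∑' q : ℕ,
                    Real.Gamma ((q : ℝ) + 1 - (i : ℝ) - α) /
                      (Real.Gamma (-α - (i : ℝ)) * (Nat.factorial (q + 1) : ℝ))))
                * Real.log (t / a) ^ (α + (i : ℝ)) * xSeq0 x i t) := by
  rintro t ⟨hat, htb⟩
  have hshift : ∀ i : ℕ, ∀ m : ℕ, α + i ≠ m := fun i m h =>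
    hα' (m - i) (by push_cast; linarith)
  have hbracket : ∀ i : ℕ, HasSum (fun q : ℕ =>
      Real.Gamma ((q : ℝ) + 1 - (i : ℝ) - α) /
        (Real.Gamma (-α - (i : ℝ)) * (Nat.factorial (q + 1) : ℝ))) (-1) := fun i => by
    simpa only [sub_sub, add_comm (i : ℝ) α, neg_add'] using
      hasSum_Gamma_sub_div_Gamma_neg_mul_factorial (by positivity) (hshift i)
  refine ⟨fun i _ => (hbracket i).summable, ?_⟩
  simp only [(hbracket _).tsum_eq, add_neg_cancel, mul_zero, zero_mul, sum_const_zero, sub_zero]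
  have hnat : ∀ m : ℕ, α ≠ m := by simpa using hshift 0
  refine (hasSum_hadIntLeft hα hnat ha hat
    (hx.continuousOn.mono (Icc_subset_Icc_right htb))).congr_fun fun q => ?_
  rw [Gamma_sub_div_Gamma_mul_Gamma_one_sub hα hnat]

/-- Series decomposition of the left Hadamard fractional integral of a `C^{n+1}`
function: for `t ∈ (a,b]`,
`_a𝓘_t^α x(t) = ∑_{i=0}^n A_i(α)(ln(t/a))^{α+i}x_{i,0}(t)
  + ∑_{p=n+1}^∞ B(α,p)(ln(t/a))^{α+n−p}V_p(t)`,
with `A_i(α) = (1/Γ(α+i+1))[1 + ∑_{p=n−i+1}^∞ Γ(p−α−n)/(Γ(−α−i)(p−n+i)!)]`,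
`B(α,p) = Γ(p−α−n)/(Γ(α)Γ(1−α)(p−n)!)`,
`V_p(t) = ∫_a^t (p−n)(ln(τ/a))^{p−n−1}x(τ)/τ dτ`, the series (reindexed by
`p = q + n + 1`, resp. `p = q + (n−i+1)`) being convergent. -/
theorem stmt13 (α a b : ℝ) (n : ℕ) (hα : 0 < α) (hα' : ∀ k : ℤ, α ≠ (k : ℝ))
    (ha : 0 < a) (hab : a < b)
    (x : ℝ → ℝ) (hx : ContDiffOn ℝ (n + 1) x (Set.Icc a b)) :
    ∀ t ∈ Set.Ioc a b,
      (∀ i : ℕ, i ≤ n →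
        Summable (fun q : ℕ =>
          Real.Gamma ((q : ℝ) + 1 - (i : ℝ) - α) /
            (Real.Gamma (-α - (i : ℝ)) * (Nat.factorial (q + 1) : ℝ)))) ∧
      HasSum
        (fun q : ℕ =>
          (Real.Gamma ((q : ℝ) + 1 - α) /
              (Real.Gamma α * Real.Gamma (1 - α) * (Nat.factorial (q + 1) : ℝ)))
            * Real.log (t / a) ^ (α - 1 - (q : ℝ))
            * ∫ τ in a..t, ((q : ℝ) + 1) * Real.log (τ / a) ^ q * x τ / τ)
        (hadIntLeft a α x t
          - ∑ i ∈ Finset.range (n + 1),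
              ((1 / Real.Gamma (α + (i : ℝ) + 1)) *
                  (1 + ∑' q : ℕ,
                    Real.Gamma ((q : ℝ) + 1 - (i : ℝ) - α) /
                      (Real.Gamma (-α - (i : ℝ)) * (Nat.factorial (q + 1) : ℝ))))
                * Real.log (t / a) ^ (α + (i : ℝ)) * xSeq0 x i t) :=
  stmt13_general α a b n hα hα' ha x hx
end
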